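/- arXiv:2006.05660 — 3 statements merged into one kernel-verified Lean document; each statement's English description precedes it below -/
import Mathlib

section
/- Let Λ be a lattice of rank n in E, let Λ' ⊆ Λ be a pure sublattice, and let π be the orthogonal projection of E onto the orthogonal complement of span(Λ'). Let t ∈ span(Λ). Suppose v ∈ Λ is such that π(v) is a closest point to π(t) in the quotient lattice π(Λ), and let w = v + w' where w' ∈ Λ' is a closest point of Λ' to the orthogonal projection of t − v onto span(Λ'). Then ‖t − w‖² ≤ μ(π(Λ))² + μ(Λ')². -/
open scoped RealInnerProductSpace
open Metric

noncomputable section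

variable {E : Type*} [NormedAddCommGroup E] [InnerProductSpace ℝ E] [FiniteDimensional ℝ E]

/-- `L ⊆ E` is a lattice of rank `n`: it is generated (over `ℤ`) by `n`
`ℝ`-linearly independent vectors. -/
def IsLatticeOfRank (L : Submodule ℤ E) (n : ℕ) : Prop :=
  ∃ b : Fin n → E, LinearIndependent ℝ b ∧ L = Submodule.span ℤ (Set.range b)

/-- The real span of a lattice. -/
def latSpan (L : Submodule ℤ E) : Submodule ℝ E := Submodule.span ℝ (L : Set E)

/-- The covering radius of a lattice, computed inside its real span. -/
def covRad (L : Submodule ℤ E) : ℝ :=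
  ⨆ x : latSpan L, infDist (x : E) (L : Set E)

/-- `L'` is a pure sublattice of `L`: the quotient is torsion-free. -/
def IsPureIn (L' L : Submodule ℤ E) : Prop :=
  L' ≤ L ∧ ∀ v ∈ L, ∀ m : ℤ, m ≠ 0 → m • v ∈ L' → v ∈ L'

/-- Orthogonal projection of `E` onto the orthogonal complement of the span
of `L'`, as a `ℤ`-linear endomorphism of `E`. -/
def projPerp (L' : Submodule ℤ E) : E →ₗ[ℤ] E :=
  ((latSpan L')ᗮ.subtype.comp (Submodule.orthogonalProjectionOnto (latSpan L')ᗮ).toLinearMap).restrictScalars ℤ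

/-- The quotient lattice `L/L'`, realized as the image of `L` under the
orthogonal projection onto the orthogonal complement of the span of `L'`. -/
def quotLat (L L' : Submodule ℤ E) : Submodule ℤ E := L.map (projPerp L')


/-!
Split `t - w = (t - v) - w'` along `span Λ' ⊕ (span Λ')ᗮ`. The component in `span Λ'` is
`P (t - v) - w'` (`P` the projection onto `span Λ'`), of length `dist (P (t - v), Λ') ≤ μ(Λ')`;
the orthogonal one is `π t - π v`, of length `dist (π t, π Λ) ≤ μ(π Λ)` since `π t` lies in the
span of `π Λ`. Pythagoras adds the squares. The covering radii are genuine suprema, not the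
junk value of an unbounded `⨆`, because `Λ`, hence `Λ'` and `π Λ`, are finitely generated.
-/

omit [FiniteDimensional ℝ E] in
theorem IsLatticeOfRank.fg {L : Submodule ℤ E} {n : ℕ} (hL : IsLatticeOfRank L n) : L.FG := by
  obtain ⟨b, -, rfl⟩ := hL
  exact Submodule.fg_span (Set.finite_range b)

omit [FiniteDimensional ℝ E] in
theorem infDist_le_sum_norm_of_eq_span (S : Finset E) {L : Submodule ℤ E}
    (hL : Submodule.span ℤ (S : Set E) = L) {x : E} (hx : x ∈ latSpan L) :
    infDist x (L : Set E) ≤ ∑ s ∈ S, ‖s‖ := by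
  rw [latSpan, ← hL, Submodule.span_span_of_tower] at hx
  obtain ⟨f, -, rfl⟩ := Submodule.mem_span_finset.mp hx
  have hfloor : ∑ s ∈ S, ⌊f s⌋ • s ∈ L :=
    hL ▸ Submodule.sum_smul_mem _ _ fun s hs => Submodule.subset_span hs
  have hfract : ∑ s ∈ S, f s • s - ∑ s ∈ S, ⌊f s⌋ • s = ∑ s ∈ S, Int.fract (f s) • s := by
    rw [← Finset.sum_sub_distrib]
    refine Finset.sum_congr rfl fun s _ => ?_
    rw [Int.fract, sub_smul, Int.cast_smul_eq_zsmul]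
  calc infDist (∑ s ∈ S, f s • s) (L : Set E)
      ≤ ‖∑ s ∈ S, Int.fract (f s) • s‖ := by
        rw [← hfract, ← dist_eq_norm]; exact infDist_le_dist_of_mem hfloor
    _ ≤ ∑ s ∈ S, ‖Int.fract (f s) • s‖ := norm_sum_le _ _
    _ ≤ ∑ s ∈ S, ‖s‖ := by
        refine Finset.sum_le_sum fun s _ => ?_
        rw [norm_smul, Real.norm_of_nonneg (Int.fract_nonneg _)]
        exact mul_le_of_le_one_left (norm_nonneg _) (Int.fract_lt_one _).le

omit [FiniteDimensional ℝ E] in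
theorem infDist_le_covRad {L : Submodule ℤ E} (hL : L.FG) {x : E} (hx : x ∈ latSpan L) :
    infDist x (L : Set E) ≤ covRad L := by
  obtain ⟨S, hS⟩ := hL
  refine le_ciSup (f := fun y : latSpan L => infDist (y : E) (L : Set E)) ?_ ⟨x, hx⟩
  exact ⟨_, Set.forall_mem_range.mpr fun y => infDist_le_sum_norm_of_eq_span S hS y.2⟩

theorem projPerp_mem_latSpan_quotLat {L : Submodule ℤ E} (L' : Submodule ℤ E) {t : E}
    (ht : t ∈ latSpan L) : projPerp L' t ∈ latSpan (quotLat L L') := by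
  let P : E →ₗ[ℝ] E := (latSpan L')ᗮ.subtype ∘ₗ (latSpan L')ᗮ.orthogonalProjectionOnto.toLinearMap
  have hquot : (quotLat L L' : Set E) = P '' L := rfl
  rw [latSpan, hquot, Submodule.span_image]
  exact Submodule.mem_map_of_mem ht

omit [FiniteDimensional ℝ E] in
theorem Submodule.norm_sub_sq_eq_of_mem (K : Submodule ℝ E) [K.HasOrthogonalProjection] (x : E)
    {y : E} (hy : y ∈ K) :
    ‖x - y‖ ^ 2 = ‖(K.orthogonalProjectionOnto x : E) - y‖ ^ 2
      + ‖(Kᗮ.orthogonalProjectionOnto x : E)‖ ^ 2 := by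
  have hsplit :
      x - y = ((K.orthogonalProjectionOnto x : E) - y) + Kᗮ.orthogonalProjectionOnto x := by
    have := K.starProjection_add_starProjection_orthogonal x
    simp only [Submodule.starProjection_apply] at this
    rw [sub_add_eq_add_sub, this]
  have horth : ⟪(K.orthogonalProjectionOnto x : E) - y, Kᗮ.orthogonalProjectionOnto x⟫ = 0 :=
    Submodule.inner_right_of_mem_orthogonal (K.sub_mem (K.orthogonalProjectionOnto x).2 hy)
      (Kᗮ.orthogonalProjectionOnto x).2
  rw [hsplit, norm_add_sq_real, horth, mul_zero, add_zero]

theorem nearest_colattice_step_bound_general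
    {E : Type*} [NormedAddCommGroup E] [InnerProductSpace ℝ E] [FiniteDimensional ℝ E]
    (n : ℕ) (L L' : Submodule ℤ E) (hL : IsLatticeOfRank L n) (hpure : IsPureIn L' L)
    (t : E) (ht : t ∈ latSpan L)
    (v : E)
    (hvclose : ‖projPerp L' t - projPerp L' v‖
        = infDist (projPerp L' t) ((quotLat L L' : Submodule ℤ E) : Set E))
    (w' : E) (hw'mem : w' ∈ L')
    (hw'close : ‖(Submodule.orthogonalProjectionOnto (latSpan L') (t - v) : E) - w'‖
        = infDist ((Submodule.orthogonalProjectionOnto (latSpan L') (t - v) : E)) (L' : Set E))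
    (w : E) (hw : w = v + w') :
    ‖t - w‖ ^ 2 ≤ covRad (quotLat L L') ^ 2 + covRad L' ^ 2 := by
  have hLfg := hL.fg
  have hperp : ‖projPerp L' t - projPerp L' v‖ ≤ covRad (quotLat L L') :=
    hvclose ▸ infDist_le_covRad (hLfg.map _) (projPerp_mem_latSpan_quotLat L' ht)
  have hpar : ‖(Submodule.orthogonalProjectionOnto (latSpan L') (t - v) : E) - w'‖
      ≤ covRad L' :=
    hw'close ▸ infDist_le_covRad (hLfg.of_le hpure.1) (Submodule.coe_mem _)
  rw [← map_sub] at hperp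
  rw [hw, ← sub_sub, (latSpan L').norm_sub_sq_eq_of_mem _ (Submodule.subset_span hw'mem),
    add_comm]
  gcongr
  exact hperp

/-- Let Λ be a lattice of rank n, Λ' ⊆ Λ a pure sublattice, π the
orthogonal projection onto the orthocomplement of span(Λ'), t ∈ span(Λ).
If v ∈ Λ is such that π(v) is closest to π(t) in π(Λ), and w = v + w' where
w' ∈ Λ' is a closest point of Λ' to the orthogonal projection of t − v onto
span(Λ'), then ‖t − w‖² ≤ μ(π(Λ))² + μ(Λ')². -/
theorem nearest_colattice_step_bound
    {E : Type*} [NormedAddCommGroup E] [InnerProductSpace ℝ E] [FiniteDimensional ℝ E]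
    (n : ℕ) (L L' : Submodule ℤ E) (hL : IsLatticeOfRank L n) (hpure : IsPureIn L' L)
    (t : E) (ht : t ∈ latSpan L)
    (v : E) (hv : v ∈ L)
    (hvclose : ‖projPerp L' t - projPerp L' v‖
        = infDist (projPerp L' t) ((quotLat L L' : Submodule ℤ E) : Set E))
    (w' : E) (hw'mem : w' ∈ L')
    (hw'close : ‖(Submodule.orthogonalProjectionOnto (latSpan L') (t - v) : E) - w'‖
        = infDist ((Submodule.orthogonalProjectionOnto (latSpan L') (t - v) : E)) (L' : Set E))
    (w : E) (hw : w = v + w') :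
    ‖t - w‖ ^ 2 ≤ covRad (quotLat L L') ^ 2 + covRad L' ^ 2 :=
  nearest_colattice_step_bound_general n L L' hL hpure t ht v hvclose w' hw'mem hw'close w hw

end
end

section
/- Let (b₁, …, b_n) be a ℤ-basis of a lattice Λ and let (b₁*, …, b_n*) be its Gram–Schmidt orthogonalization. Then for every t ∈ span(Λ) there exists v ∈ Λ with ‖v − t‖² ≤ (1/4)·Σ_{i=1}^n ‖b_i*‖². In particular, for the complete filtration Λ_i = ℤb₁ + ⋯ + ℤb_i, each rank-one quotient Λ_i/Λ_{i−1} has covering radius (1/2)‖b_i*‖, equal to half its covolume. -/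
/-!
Babai's nearest plane argument. Write `Λₖ = ℤb₁ + ⋯ + ℤbₖ`. The projection of `bₖ` onto
`(span Λₖ₋₁)ᗮ` is the Gram–Schmidt vector `bₖ*`, so every `t ∈ span Λₖ` is `y + r bₖ*` with
`y ∈ span Λₖ₋₁`. Subtracting `round r • bₖ ∈ Λₖ` leaves an error of at most `‖bₖ*‖ / 2` along
`bₖ*`, orthogonal to a point of `span Λₖ₋₁` that is handled recursively; by Pythagoras the
squared errors add up to at most `¼ ∑ ‖bᵢ*‖²`. The same projection identifies `Λₖ / Λₖ₋₁` with
`ℤ bₖ*`, and a rank-one lattice `ℤ g` has covering radius `‖g‖ / 2`, attained at `g / 2`.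
-/

open scoped RealInnerProductSpace
open Metric

noncomputable section

variable {E : Type*} [NormedAddCommGroup E] [InnerProductSpace ℝ E] [FiniteDimensional ℝ E]

instance finWellFoundedLT (n : ℕ) : WellFoundedLT (Fin n) := inferInstance

/-- The partial lattice ℤb₁ + ⋯ + ℤb_i generated by the first i vectors. -/
def chainOf {E : Type*} [NormedAddCommGroup E] [InnerProductSpace ℝ E]
    {n : ℕ} (b : Fin n → E) (i : ℕ) : Submodule ℤ E :=
  Submodule.span ℤ (b '' {j : Fin n | (j : ℕ) < i})


open InnerProductSpace Submodule

section GramSchmidt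

variable {𝕜 F ι : Type*} [RCLike 𝕜] [NormedAddCommGroup F] [InnerProductSpace 𝕜 F]
  [LinearOrder ι] [LocallyFiniteOrderBot ι] [WellFoundedLT ι]

theorem gramSchmidt_mem_orthogonal_span_Iio (f : ι → F) (i : ι) :
    gramSchmidt 𝕜 f i ∈ (span 𝕜 (f '' Set.Iio i))ᗮ := by
  rw [← span_gramSchmidt_Iio]
  refine (isOrtho_iff_le.1 (isOrtho_span.2 ?_)) (mem_span_singleton_self _)
  rintro _ rfl _ ⟨j, hj, rfl⟩
  exact gramSchmidt_orthogonal 𝕜 f (ne_of_gt hj)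

theorem sub_gramSchmidt_mem_span_Iio (f : ι → F) (i : ι) :
    f i - gramSchmidt 𝕜 f i ∈ span 𝕜 (f '' Set.Iio i) := by
  rw [← span_gramSchmidt_Iio 𝕜 f i, gramSchmidt_def 𝕜 f i, sub_sub_cancel]
  refine sum_mem fun j hj => span_mono ?_ (starProjection_apply_mem _ _)
  exact Set.singleton_subset_iff.2 (Set.mem_image_of_mem _ (Finset.mem_Iio.1 hj))

end GramSchmidt

section Lattice

variable {F : Type*} [NormedAddCommGroup F] [InnerProductSpace ℝ F]

theorem latSpan_span (s : Set F) : latSpan (span ℤ s) = span ℝ s :=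
  span_span_of_tower ℤ ℝ s

theorem latSpan_sup (A B : Submodule ℤ F) : latSpan (A ⊔ B) = latSpan A ⊔ latSpan B := by
  conv_lhs => rw [← span_eq A, ← span_eq B, ← span_union, latSpan_span]
  exact span_union _ _

theorem norm_eq_of_zspan_singleton_eq {g g' : F} (h : ℤ ∙ g = ℤ ∙ g') : ‖g‖ = ‖g'‖ := by
  have := IsAddTorsionFree.of_isTorsionFree ℝ F
  obtain ⟨u, rfl⟩ := span_singleton_eq_span_singleton.1 h
  rcases Int.units_eq_one_or u with rfl | rfl <;> simp

theorem covRad_zspan_singleton (g : F) : covRad (ℤ ∙ g) = (1 / 2 : ℝ) * ‖g‖ := by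
  have hdist (r : ℝ) (m : ℤ) : dist (r • g) (m • g) = |r - m| * ‖g‖ := by
    rw [dist_eq_norm, ← Int.cast_smul_eq_zsmul ℝ, ← sub_smul, norm_smul, Real.norm_eq_abs]
  have hspan : latSpan (ℤ ∙ g) = ℝ ∙ g := latSpan_span {g}
  have hle (x : latSpan (ℤ ∙ g)) : infDist (x : F) (ℤ ∙ g : Set F) ≤ (1 / 2) * ‖g‖ := by
    obtain ⟨r, hr⟩ := mem_span_singleton.1 (show (x : F) ∈ ℝ ∙ g by rw [← hspan]; exact x.2)
    rw [← hr]
    calc infDist (r • g) (ℤ ∙ g : Set F) ≤ dist (r • g) (round r • g) :=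
          infDist_le_dist_of_mem (smul_mem _ _ (mem_span_singleton_self g))
      _ ≤ (1 / 2) * ‖g‖ := by
          rw [hdist]; exact mul_le_mul_of_nonneg_right (abs_sub_round r) (norm_nonneg g)
  refine le_antisymm (ciSup_le hle) ?_
  have hhalf : ((1 / 2 : ℝ) • g) ∈ latSpan (ℤ ∙ g) := by
    rw [hspan]; exact smul_mem _ _ (mem_span_singleton_self g)
  refine le_trans ?_ (le_ciSup ⟨_, Set.forall_mem_range.2 hle⟩ ⟨_, hhalf⟩)
  refine (le_infDist ⟨0, zero_mem _⟩).2 fun y hy => ?_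
  obtain ⟨m, rfl⟩ := mem_span_singleton.1 hy
  rw [hdist]
  refine mul_le_mul_of_nonneg_right ?_ (norm_nonneg g)
  rcases le_or_gt m 0 with hm | hm
  · have : (m : ℝ) ≤ 0 := by exact_mod_cast hm
    rw [abs_of_nonneg (by linarith)]; linarith
  · have : (1 : ℝ) ≤ m := by exact_mod_cast hm
    rw [abs_of_nonpos (by linarith)]; linarith

end Lattice

section Projection

variable {F : Type*} [NormedAddCommGroup F] [InnerProductSpace ℝ F] [FiniteDimensional ℝ F]

theorem projPerp_apply (Λ : Submodule ℤ F) (x : F) :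
    projPerp Λ x = (latSpan Λ)ᗮ.starProjection x :=
  rfl

theorem projPerp_mem_orthogonal (Λ : Submodule ℤ F) (x : F) : projPerp Λ x ∈ (latSpan Λ)ᗮ :=
  starProjection_apply_mem _ x

theorem sub_projPerp_mem_latSpan (Λ : Submodule ℤ F) (x : F) : x - projPerp Λ x ∈ latSpan Λ := by
  rw [projPerp_apply, starProjection_orthogonal_val, sub_sub_cancel]
  exact starProjection_apply_mem _ x

theorem projPerp_eq_zero_of_mem {Λ : Submodule ℤ F} {x : F} (hx : x ∈ Λ) : projPerp Λ x = 0 := by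
  rw [projPerp_apply, starProjection_apply_eq_zero_iff]
  exact (latSpan Λ).le_orthogonal_orthogonal (subset_span hx)

theorem projPerp_eq_of_sub_mem_latSpan {Λ : Submodule ℤ F} {x y : F} (hy : y ∈ (latSpan Λ)ᗮ)
    (hxy : x - y ∈ latSpan Λ) : projPerp Λ x = y := by
  rw [projPerp_apply]
  exact eq_starProjection_of_mem_orthogonal hy ((latSpan Λ).le_orthogonal_orthogonal hxy)

theorem quotLat_sup_zspan_singleton (Λ : Submodule ℤ F) (w : F) :
    quotLat (Λ ⊔ ℤ ∙ w) Λ = ℤ ∙ projPerp Λ w := by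
  have hΛ : Λ.map (projPerp Λ) = ⊥ :=
    eq_bot_iff.2 <| map_le_iff_le_comap.2 fun _ hx => (mem_bot ℤ).2 (projPerp_eq_zero_of_mem hx)
  rw [quotLat, Submodule.map_sup, hΛ, bot_sup_eq, map_span, Set.image_singleton]

theorem exists_norm_sub_sq_le_of_sup_zspan_singleton {Λ : Submodule ℤ F} {R : ℝ}
    (hΛ : ∀ t ∈ latSpan Λ, ∃ v ∈ Λ, ‖v - t‖ ^ 2 ≤ R) (w : F) :
    ∀ t ∈ latSpan (Λ ⊔ ℤ ∙ w), ∃ v ∈ Λ ⊔ ℤ ∙ w,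
      ‖v - t‖ ^ 2 ≤ R + (1 / 4) * ‖projPerp Λ w‖ ^ 2 := by
  intro t ht
  rw [latSpan_sup, latSpan_span, mem_sup] at ht
  obtain ⟨y, hy, _, hz, rfl⟩ := ht
  obtain ⟨r, rfl⟩ := mem_span_singleton.1 hz
  set w' := projPerp Λ w
  set m := round r
  set s := y + (r - m) • (w - w')
  have hs : s ∈ latSpan Λ := add_mem hy (smul_mem _ _ (sub_projPerp_mem_latSpan Λ w))
  obtain ⟨v, hv, hvs⟩ := hΛ s hs
  refine ⟨v + m • w, add_mem (mem_sup_left hv)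
    (mem_sup_right (smul_mem _ m (mem_span_singleton_self w))), ?_⟩
  have hdecomp : v + m • w - (y + r • w) = (v - s) + ((m : ℝ) - r) • w' := by
    rw [← Int.cast_smul_eq_zsmul ℝ]
    module
  have hround : ((m : ℝ) - r) ^ 2 ≤ 1 / 4 := by
    have := abs_le.1 (abs_sub_round r)
    nlinarith
  have horth : ⟪v - s, ((m : ℝ) - r) • w'⟫ = 0 :=
    inner_right_of_mem_orthogonal (sub_mem (subset_span hv) hs)
      (smul_mem _ _ (projPerp_mem_orthogonal Λ w))
  rw [hdecomp, norm_add_sq_real, horth, mul_zero, add_zero, norm_smul, mul_pow, Real.norm_eq_abs,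
    sq_abs]
  gcongr

end Projection

section Chain

variable {F : Type*} [NormedAddCommGroup F] [InnerProductSpace ℝ F] {n : ℕ} (b : Fin n → F)

theorem chainOf_zero : chainOf b 0 = ⊥ := by
  simp [chainOf]

theorem chainOf_succ {k : ℕ} (hk : k < n) : chainOf b (k + 1) = chainOf b k ⊔ ℤ ∙ b ⟨k, hk⟩ := by
  have hset : {j : Fin n | (j : ℕ) < k + 1} = insert ⟨k, hk⟩ {j : Fin n | (j : ℕ) < k} := by
    ext j
    simp only [Set.mem_insert_iff, Set.mem_ofPred_eq, Fin.ext_iff]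
    omega
  rw [chainOf, hset, Set.image_insert_eq, span_insert, sup_comm, chainOf]

theorem chainOf_self : chainOf b n = span ℤ (Set.range b) := by
  simp [chainOf]

variable [FiniteDimensional ℝ F]

theorem projPerp_chainOf_apply (i : Fin n) :
    projPerp (chainOf b i) (b i) = gramSchmidt ℝ b i := by
  have hspan : latSpan (chainOf b i) = span ℝ (b '' Set.Iio i) := latSpan_span _
  refine projPerp_eq_of_sub_mem_latSpan ?_ ?_ <;> rw [hspan]
  · exact gramSchmidt_mem_orthogonal_span_Iio b i
  · exact sub_gramSchmidt_mem_span_Iio b i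

theorem quotLat_chainOf_succ (i : Fin n) :
    quotLat (chainOf b (i + 1)) (chainOf b i) = ℤ ∙ gramSchmidt ℝ b i := by
  rw [chainOf_succ b i.isLt, quotLat_sup_zspan_singleton, projPerp_chainOf_apply]

theorem exists_mem_chainOf_norm_sub_sq_le {k : ℕ} (hk : k ≤ n) :
    ∀ t ∈ latSpan (chainOf b k), ∃ v ∈ chainOf b k,
      ‖v - t‖ ^ 2 ≤ (1 / 4) * ∑ j ∈ Finset.univ.filter (fun j : Fin n => (j : ℕ) < k),
        ‖gramSchmidt ℝ b j‖ ^ 2 := by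
  induction k with
  | zero =>
    intro t ht
    obtain rfl : t = 0 := by simpa [chainOf_zero, latSpan] using ht
    exact ⟨0, zero_mem _, by simp⟩
  | succ k ih =>
    have hkn : k < n := hk
    have hfilter : Finset.univ.filter (fun j : Fin n => (j : ℕ) < k + 1)
        = insert ⟨k, hkn⟩ (Finset.univ.filter fun j : Fin n => (j : ℕ) < k) := by
      ext j
      simp only [Finset.mem_insert, Finset.mem_filter, Finset.mem_univ, true_and, Fin.ext_iff]
      omega
    rw [chainOf_succ b hkn, hfilter, Finset.sum_insert (by simp), add_comm, mul_add]
    have := exists_norm_sub_sq_le_of_sup_zspan_singleton (ih hkn.le) (b ⟨k, hkn⟩)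
    rwa [projPerp_chainOf_apply b ⟨k, hkn⟩] at this

end Chain

theorem babai_nearest_plane_bound_general
    {E : Type*} [NormedAddCommGroup E] [InnerProductSpace ℝ E] [FiniteDimensional ℝ E]
    (n : ℕ) (L : Submodule ℤ E) (b : Fin n → E)
    (hbL : L = Submodule.span ℤ (Set.range b)) :
    (∀ t ∈ latSpan L, ∃ v ∈ L,
        ‖v - t‖ ^ 2 ≤ (1 / 4 : ℝ) * ∑ i, ‖InnerProductSpace.gramSchmidt ℝ b i‖ ^ 2) ∧
    (∀ i : Fin n,
        covRad (quotLat (chainOf b ((i : ℕ) + 1)) (chainOf b (i : ℕ)))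
          = (1 / 2 : ℝ) * ‖InnerProductSpace.gramSchmidt ℝ b i‖ ∧
        ∀ g : E, quotLat (chainOf b ((i : ℕ) + 1)) (chainOf b (i : ℕ))
              = Submodule.span ℤ {g} →
          covRad (quotLat (chainOf b ((i : ℕ) + 1)) (chainOf b (i : ℕ)))
            = (1 / 2 : ℝ) * ‖g‖) := by
  refine ⟨fun t ht => ?_, fun i => ?_⟩
  · rw [hbL, ← chainOf_self] at ht ⊢
    simpa using exists_mem_chainOf_norm_sub_sq_le b le_rfl t ht
  · rw [quotLat_chainOf_succ, covRad_zspan_singleton]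
    exact ⟨rfl, fun g hg => by rw [norm_eq_of_zspan_singleton_eq hg]⟩

/-- Let (b₁, …, b_n) be a ℤ-basis of a lattice Λ with Gram–Schmidt
orthogonalization (b₁*, …, b_n*). Then every t ∈ span(Λ) admits v ∈ Λ with
‖v − t‖² ≤ (1/4)·Σ ‖b_i*‖²; moreover for the complete filtration
Λ_i = ℤb₁ + ⋯ + ℤb_i each rank-one quotient Λ_i/Λ_{i−1} has covering radius
(1/2)‖b_i*‖, which is half its covolume (the covolume of a rank-one lattice
ℤ·g being ‖g‖). -/
theorem babai_nearest_plane_bound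
    {E : Type*} [NormedAddCommGroup E] [InnerProductSpace ℝ E] [FiniteDimensional ℝ E]
    (n : ℕ) (L : Submodule ℤ E) (b : Fin n → E)
    (hb : LinearIndependent ℝ b) (hbL : L = Submodule.span ℤ (Set.range b)) :
    (∀ t ∈ latSpan L, ∃ v ∈ L,
        ‖v - t‖ ^ 2 ≤ (1 / 4 : ℝ) * ∑ i, ‖InnerProductSpace.gramSchmidt ℝ b i‖ ^ 2) ∧
    (∀ i : Fin n,
        covRad (quotLat (chainOf b ((i : ℕ) + 1)) (chainOf b (i : ℕ)))
          = (1 / 2 : ℝ) * ‖InnerProductSpace.gramSchmidt ℝ b i‖ ∧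
        ∀ g : E, quotLat (chainOf b ((i : ℕ) + 1)) (chainOf b (i : ℕ))
              = Submodule.span ℤ {g} →
          covRad (quotLat (chainOf b ((i : ℕ) + 1)) (chainOf b (i : ℕ)))
            = (1 / 2 : ℝ) * ‖g‖) :=
  babai_nearest_plane_bound_general n L b hbL

end
end

section
/- Let Λ be a lattice of rank n, let Λ' ⊆ Λ be a pure sublattice of rank i, and let π be the orthogonal projection of E onto the orthogonal complement of span(Λ'). Then for every 1 ≤ j ≤ n − i, the j-th successive minimum of the quotient lattice satisfies λ_j(π(Λ)) ≤ λ_n(Λ). -/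
/-! The projection `π` is norm-nonincreasing and its kernel is `span Λ'`, of dimension `i`.
Given `n` independent vectors of `Λ` of norm at most `r`, rank–nullity shows that their images
span a space of dimension at least `n - i`, so `π Λ` contains `n - i` independent vectors of
norm at most `r`. -/

open scoped RealInnerProductSpace
open Metric

noncomputable section

variable {E : Type*} [NormedAddCommGroup E] [InnerProductSpace ℝ E] [FiniteDimensional ℝ E]

/-- The `i`-th successive minimum of a set `S`: the infimum of `r > 0` such
that `S` contains `i` linearly independent vectors of norm at most `r`. -/
def succMin (S : Set E) (i : ℕ) : ℝ :=
  sInf {r : ℝ | 0 < r ∧ ∃ v : Fin i → E,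
    (∀ j, v j ∈ S) ∧ LinearIndependent ℝ v ∧ ∀ j, ‖v j‖ ≤ r}

/-- `x` belongs to the dual lattice of `L`. -/
def MemDual (L : Submodule ℤ E) (x : E) : Prop :=
  ∀ v ∈ L, ∃ m : ℤ, ⟪x, v⟫ = (m : ℝ)

/-- The dual lattice of `L`, as a set. -/
def dualSet (L : Submodule ℤ E) : Set E := {x | MemDual L x}

/-- The covolume of the lattice generated by `b`, as the square root of the
Gram determinant of `b`. -/
def gramVol {k : ℕ} (b : Fin k → E) : ℝ :=
  Real.sqrt (Matrix.det (Matrix.of fun i j => ⟪b i, b j⟫))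

end

open Module

theorem Submodule.exists_linearIndependent_fin_of_le_finrank_span {K V : Type*} [DivisionRing K]
    [AddCommGroup V] [Module K V] {s : Set V} [Module.Finite K (Submodule.span K s)] {j : ℕ}
    (hj : j ≤ finrank K (Submodule.span K s)) :
    ∃ w : Fin j → V, (∀ k, w k ∈ s) ∧ LinearIndependent K w := by
  obtain ⟨w, hws, -, hw⟩ := Submodule.exists_fun_fin_finrank_span_eq K s
  exact ⟨w ∘ Fin.castLE hj, fun k => hws _, hw.comp _ (Fin.castLE_injective hj)⟩

theorem Submodule.finrank_le_finrank_map_add_finrank_ker {K V W : Type*} [DivisionRing K]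
    [AddCommGroup V] [Module K V] [FiniteDimensional K V] [AddCommGroup W] [Module K W]
    (f : V →ₗ[K] W) (p : Submodule K V) :
    finrank K p ≤ finrank K (p.map f) + finrank K (LinearMap.ker f) := by
  have hrn := (f.domRestrict p).finrank_range_add_finrank_ker
  rw [LinearMap.range_domRestrict] at hrn
  have hker : finrank K (LinearMap.ker (f.domRestrict p)) ≤ finrank K (LinearMap.ker f) := by
    rw [← Submodule.finrank_map_subtype_eq]
    refine Submodule.finrank_mono ?_
    rintro _ ⟨x, hx, rfl⟩
    exact hx
  omega

section

variable {E : Type*} [NormedAddCommGroup E] [InnerProductSpace ℝ E]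

def HasIndepFamilyWithin {F : Type*} [NormedAddCommGroup F] [NormedSpace ℝ F]
    (S : Set F) (i : ℕ) (r : ℝ) : Prop :=
  ∃ v : Fin i → F, (∀ k, v k ∈ S) ∧ LinearIndependent ℝ v ∧ ∀ k, ‖v k‖ ≤ r

theorem succMin_le_succMin_of_forall_hasIndepFamilyWithin {S T : Set E} {m j : ℕ}
    (hS : ∃ v : Fin m → E, (∀ k, v k ∈ S) ∧ LinearIndependent ℝ v)
    (h : ∀ r, HasIndepFamilyWithin S m r → HasIndepFamilyWithin T j r) :
    succMin T j ≤ succMin S m := by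
  refine csInf_le_csInf ⟨0, fun r hr => hr.1.le⟩ ?_ fun r hr => ⟨hr.1, h r hr.2⟩
  obtain ⟨v, hvS, hv⟩ := hS
  obtain ⟨M, hM⟩ := Finite.exists_le fun k => ‖v k‖
  exact ⟨max M 1, by positivity, v, hvS, hv, fun k => (hM k).trans (le_max_left _ _)⟩

theorem HasIndepFamilyWithin.image {V F : Type*} [NormedAddCommGroup V] [NormedSpace ℝ V]
    [FiniteDimensional ℝ V] [NormedAddCommGroup F] [NormedSpace ℝ F]
    {S : Set V} {m j : ℕ} {r : ℝ} (h : HasIndepFamilyWithin S m r) (f : V →ₗ[ℝ] F)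
    (hf : ∀ x, ‖f x‖ ≤ ‖x‖) (hj : j ≤ m - finrank ℝ (LinearMap.ker f)) :
    HasIndepFamilyWithin (f '' S) j r := by
  obtain ⟨v, hvS, hv, hvr⟩ := h
  have hspan : Submodule.span ℝ (Set.range (f ∘ v)) = (Submodule.span ℝ (Set.range v)).map f := by
    rw [Set.range_comp, Submodule.span_image]
  have hrank : j ≤ finrank ℝ (Submodule.span ℝ (Set.range (f ∘ v))) := by
    have := Submodule.finrank_le_finrank_map_add_finrank_ker f (Submodule.span ℝ (Set.range v))
    rw [finrank_span_eq_card hv, Fintype.card_fin, ← hspan] at this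
    omega
  have := FiniteDimensional.span_of_finite ℝ (Set.finite_range (f ∘ v))
  obtain ⟨w, hw, hwli⟩ := Submodule.exists_linearIndependent_fin_of_le_finrank_span hrank
  choose l hl using hw
  refine ⟨w, fun k => ⟨v (l k), hvS _, hl k⟩, hwli, fun k => ?_⟩
  rw [← hl k]
  exact (hf _).trans (hvr _)

theorem IsLatticeOfRank.finrank_latSpan {L : Submodule ℤ E} {n : ℕ} (hL : IsLatticeOfRank L n) :
    finrank ℝ (latSpan L) = n := by
  obtain ⟨b, hb, rfl⟩ := hL
  rw [latSpan, Submodule.span_span_of_tower, finrank_span_eq_card hb, Fintype.card_fin]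

variable [FiniteDimensional ℝ E]

theorem projPerp_eq_starProjection (L' : Submodule ℤ E) :
    ⇑(projPerp L') = (latSpan L')ᗮ.starProjection :=
  rfl

theorem coe_quotLat (L L' : Submodule ℤ E) :
    (quotLat L L' : Set E) = (latSpan L')ᗮ.starProjection '' L := by
  rw [quotLat, Submodule.map_coe, projPerp_eq_starProjection]

theorem succMin_quotient_le_general
    {E : Type*} [NormedAddCommGroup E] [InnerProductSpace ℝ E] [FiniteDimensional ℝ E]
    (n i : ℕ) (L L' : Submodule ℤ E)
    (hL : IsLatticeOfRank L n) (hL' : IsLatticeOfRank L' i)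
    (j : ℕ) (hj2 : j ≤ n - i) :
    succMin ((quotLat L L' : Submodule ℤ E) : Set E) j ≤ succMin (L : Set E) n := by
  obtain ⟨b, hb, rfl⟩ := hL
  refine succMin_le_succMin_of_forall_hasIndepFamilyWithin
    ⟨b, fun k => Submodule.subset_span ⟨k, rfl⟩, hb⟩ fun r hr => ?_
  have hker : LinearMap.ker ((latSpan L')ᗮ.starProjection : E →ₗ[ℝ] E) = latSpan L' := by
    rw [Submodule.ker_starProjection, Submodule.orthogonal_orthogonal]
  rw [coe_quotLat]
  exact hr.image _ (Submodule.norm_starProjection_apply_le _) (by rwa [hker, hL'.finrank_latSpan])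

/-- Let Λ be a lattice of rank n, Λ' ⊆ Λ a pure sublattice of
rank i, and π the orthogonal projection onto the orthogonal complement of
span(Λ'). Then for every 1 ≤ j ≤ n − i, λ_j(π(Λ)) ≤ λ_n(Λ). -/
theorem succMin_quotient_le
    {E : Type*} [NormedAddCommGroup E] [InnerProductSpace ℝ E] [FiniteDimensional ℝ E]
    (n i : ℕ) (L L' : Submodule ℤ E)
    (hL : IsLatticeOfRank L n) (hL' : IsLatticeOfRank L' i)
    (hpure : IsPureIn L' L)
    (j : ℕ) (hj1 : 1 ≤ j) (hj2 : j ≤ n - i) :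
    succMin ((quotLat L L' : Submodule ℤ E) : Set E) j ≤ succMin (L : Set E) n :=
  succMin_quotient_le_general n i L L' hL hL' j hj2

end
end
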